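/- Let φ : ℝⁿ → ℝᵖ be twice continuously differentiable. Its hyper-dual extension satisfies φ̃(y + vε₁ + wε₂ + uε₁₂) = φ(y) + Dφ(y)[v]ε₁ + Dφ(y)[w]ε₂ + (D²φ(y)[v,w] + Dφ(y)[u])ε₁₂, and this extension is functorial under composition: for ψ twice continuously differentiable on the range of φ, ψ̃ ∘ φ̃ equals the hyper-dual extension of ψ ∘ φ. -/

import Mathlib

/-- The hyper-dual extension of a map `φ`: it sends
`y + vε₁ + wε₂ + uε₁₂` (encoded as the quadruple `(y, v, w, u)`) to
`φ(y) + Dφ(y)[v]ε₁ + Dφ(y)[w]ε₂ + (D²φ(y)[v,w] + Dφ(y)[u])ε₁₂`. -/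
noncomputable def hyperExt {E F : Type*} [NormedAddCommGroup E] [NormedSpace ℝ E]
    [NormedAddCommGroup F] [NormedSpace ℝ F] (φ : E → F)
    (z : E × E × E × E) : F × F × F × F :=
  (φ z.1, fderiv ℝ φ z.1 z.2.1, fderiv ℝ φ z.1 z.2.2.1,
    fderiv ℝ (fderiv ℝ φ) z.1 z.2.1 z.2.2.1 + fderiv ℝ φ z.1 z.2.2.2)

section SecondOrderChainRule

variable {𝕜 E F G : Type*} [NontriviallyNormedField 𝕜]
  [NormedAddCommGroup E] [NormedSpace 𝕜 E] [NormedAddCommGroup F] [NormedSpace 𝕜 F]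
  [NormedAddCommGroup G] [NormedSpace 𝕜 G] {φ : E → F} {ψ : F → G}

theorem fderiv_comp_eq_comp_fderiv (hφ : Differentiable 𝕜 φ) (hψ : Differentiable 𝕜 ψ) :
    fderiv 𝕜 (ψ ∘ φ) = fun x => (fderiv 𝕜 ψ (φ x)).comp (fderiv 𝕜 φ x) :=
  funext fun x => fderiv_comp x (hψ (φ x)) (hφ x)

theorem fderiv_fderiv_comp_apply {y : E} (hφ : Differentiable 𝕜 φ) (hψ : Differentiable 𝕜 ψ)
    (hφ' : DifferentiableAt 𝕜 (fderiv 𝕜 φ) y) (hψ' : DifferentiableAt 𝕜 (fderiv 𝕜 ψ) (φ y))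
    (v w : E) :
    fderiv 𝕜 (fderiv 𝕜 (ψ ∘ φ)) y v w
      = fderiv 𝕜 (fderiv 𝕜 ψ) (φ y) (fderiv 𝕜 φ y v) (fderiv 𝕜 φ y w)
        + fderiv 𝕜 ψ (φ y) (fderiv 𝕜 (fderiv 𝕜 φ) y v w) := by
  -- differentiate `x ↦ Dψ(φ x) ∘ Dφ x` by the product rule for composition of linear maps
  have hψ'φ : HasFDerivAt (fun x => fderiv 𝕜 ψ (φ x))
      ((fderiv 𝕜 (fderiv 𝕜 ψ) (φ y)).comp (fderiv 𝕜 φ y)) y :=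
    hψ'.hasFDerivAt.comp y (hφ y).hasFDerivAt
  rw [fderiv_comp_eq_comp_fderiv hφ hψ, (hψ'φ.clm_comp hφ'.hasFDerivAt).fderiv]
  simp only [add_apply, ContinuousLinearMap.comp_apply,
    ContinuousLinearMap.compL_apply, ContinuousLinearMap.flip_apply]
  exact add_comm _ _

end SecondOrderChainRule

theorem hyperExt_hyperExt {E F G : Type*} [NormedAddCommGroup E] [NormedSpace ℝ E]
    [NormedAddCommGroup F] [NormedSpace ℝ F] [NormedAddCommGroup G] [NormedSpace ℝ G]
    {φ : E → F} {ψ : F → G} {z : E × E × E × E} (hφ : Differentiable ℝ φ)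
    (hψ : Differentiable ℝ ψ) (hφ' : DifferentiableAt ℝ (fderiv ℝ φ) z.1)
    (hψ' : DifferentiableAt ℝ (fderiv ℝ ψ) (φ z.1)) :
    hyperExt ψ (hyperExt φ z) = hyperExt (ψ ∘ φ) z := by
  obtain ⟨y, v, w, u⟩ := z
  have hD : fderiv ℝ (ψ ∘ φ) y = (fderiv ℝ ψ (φ y)).comp (fderiv ℝ φ y) :=
    congrFun (fderiv_comp_eq_comp_fderiv hφ hψ) y
  simp only [hyperExt, fderiv_fderiv_comp_apply hφ hψ hφ' hψ', hD,
    ContinuousLinearMap.comp_apply, Function.comp_apply, map_add, add_assoc]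

/-- For twice continuously differentiable `φ : ℝⁿ → ℝᵖ` the
hyper-dual extension satisfies
`φ̃(y + vε₁ + wε₂ + uε₁₂) = φ(y) + Dφ(y)[v]ε₁ + Dφ(y)[w]ε₂ + (D²φ(y)[v,w] + Dφ(y)[u])ε₁₂`,
and the extension is functorial under composition: for twice continuously
differentiable `ψ : ℝᵖ → ℝ^q`, `ψ̃ ∘ φ̃` equals the hyper-dual extension of `ψ ∘ φ`. -/
theorem hyperExt_comp {n p q : ℕ}
    (φ : (Fin n → ℝ) → (Fin p → ℝ)) (ψ : (Fin p → ℝ) → (Fin q → ℝ))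
    (hφ : ContDiff ℝ 2 φ) (hψ : ContDiff ℝ 2 ψ) :
    (∀ y v w u : Fin n → ℝ,
      hyperExt φ (y, v, w, u)
        = (φ y, fderiv ℝ φ y v, fderiv ℝ φ y w,
            fderiv ℝ (fderiv ℝ φ) y v w + fderiv ℝ φ y u)) ∧
    (∀ y v w u : Fin n → ℝ,
      hyperExt ψ (hyperExt φ (y, v, w, u)) = hyperExt (ψ ∘ φ) (y, v, w, u)) := by
  have hφ1 : Differentiable ℝ φ := hφ.differentiable two_ne_zero
  have hψ1 : Differentiable ℝ ψ := hψ.differentiable two_ne_zero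
  have hφ2 : Differentiable ℝ (fderiv ℝ φ) :=
    (hφ.fderiv_right one_add_one_eq_two.le).differentiable one_ne_zero
  have hψ2 : Differentiable ℝ (fderiv ℝ ψ) :=
    (hψ.fderiv_right one_add_one_eq_two.le).differentiable one_ne_zero
  exact ⟨fun _ _ _ _ => rfl, fun y v w u => hyperExt_hyperExt hφ1 hψ1 (hφ2 y) (hψ2 (φ y))⟩
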